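/- arXiv:1207.6260 — 4 statements merged into one kernel-verified Lean document; each statement's English description precedes it below -/
import Mathlib

section
/- Let H be a distribution on functions from {0,1}^n to {0,1}^m, X a distribution over {0,1}^n, and U uniform over {0,1}^m. Then the statistical distance between (H, H(X)) and (H, U) is at most (1/2)·sqrt(2^m · Pr_{H,X,X'}[H(X)=H(X')] − 1), where X' is an independent copy of X. -/
open Finset

/-- Statistical distance between two distributions (given as real-valued mass
functions) on a finite type: half the ℓ₁ distance. -/
noncomputable def statDist {α : Type*} [Fintype α] (f g : α → ℝ) : ℝ :=
  (∑ a, |f a - g a|) / 2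

/-- `f` is a probability distribution on the finite type `α`. -/
def IsDist {α : Type*} [Fintype α] (f : α → ℝ) : Prop :=
  (∀ a, 0 ≤ f a) ∧ ∑ a, f a = 1

/-!
Conditioned on `H = h`, let `p_h` be the distribution of `h(X)` on a set of size `N = 2^m`.
Twice the conditional distance is `δ_h = ∑_y |p_h y - 1/N|`, and Cauchy–Schwarz gives
`δ_h² ≤ N ∑_y (p_h y - 1/N)² = N ∑_y p_h y² - 1`. Averaging over `H` with Jensen,
`(E δ_H)² ≤ E δ_H² ≤ N · E ∑_y p_H y² - 1`, and `E ∑_y p_H y²` is the collision probability.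
-/

section

variable {α β : Type*} [Fintype α] [Fintype β]

theorem statDist_mul_fst_eq_sum {μ : α → ℝ} (hμ : ∀ a, 0 ≤ μ a) (p r : α → β → ℝ) :
    statDist (fun q : α × β => μ q.1 * p q.1 q.2) (fun q => μ q.1 * r q.1 q.2)
      = ∑ a, μ a * statDist (p a) (r a) := by
  simp only [statDist, Fintype.sum_prod_type, ← mul_sub, abs_mul, abs_of_nonneg (hμ _),
    ← mul_sum, sum_div, mul_div_assoc]

theorem sum_sub_inv_card_sq {p : β → ℝ} (hp : ∑ b, p b = 1) :
    ∑ b, (p b - (Fintype.card β : ℝ)⁻¹) ^ 2 = ∑ b, p b ^ 2 - (Fintype.card β : ℝ)⁻¹ := by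
  have hN (N : ℝ) : N⁻¹ ^ 2 * N = N⁻¹ := by
    calc N⁻¹ ^ 2 * N = N⁻¹ * N⁻¹⁻¹ * N⁻¹ := by rw [inv_inv]; ring
      _ = N⁻¹ := mul_inv_mul_cancel _
  simp only [sub_sq, sum_add_distrib, sum_sub_distrib, ← sum_mul, ← mul_sum, hp, sum_const,
    card_univ, nsmul_eq_mul]
  linear_combination hN (Fintype.card β : ℝ)

theorem sq_two_mul_statDist_uniform_le {p : β → ℝ} (hp : ∑ b, p b = 1) :
    (2 * statDist p fun _ => (Fintype.card β : ℝ)⁻¹) ^ 2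
      ≤ Fintype.card β * ∑ b, p b ^ 2 - 1 := by
  obtain ⟨b, -, -⟩ := exists_ne_zero_of_sum_ne_zero (hp.trans_ne one_ne_zero)
  have : Nonempty β := ⟨b⟩
  have hβ : (Fintype.card β : ℝ) ≠ 0 := Nat.cast_ne_zero.mpr Fintype.card_ne_zero
  have hcs := sq_sum_le_card_mul_sum_sq (s := univ)
    (f := fun b => |p b - (Fintype.card β : ℝ)⁻¹|)
  simp only [sq_abs, sum_sub_inv_card_sq hp, card_univ, mul_sub, mul_inv_cancel₀ hβ] at hcs
  rwa [statDist, mul_div_cancel₀ _ two_ne_zero]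

theorem statDist_mul_fst_uniform_le {μ : α → ℝ} (hμ : IsDist μ) {p : α → β → ℝ}
    (hp : ∀ a, ∑ b, p a b = 1) :
    statDist (fun q : α × β => μ q.1 * p q.1 q.2) (fun q => μ q.1 * (Fintype.card β : ℝ)⁻¹)
      ≤ 1 / 2 * Real.sqrt (Fintype.card β * ∑ a, μ a * ∑ b, p a b ^ 2 - 1) := by
  rw [statDist_mul_fst_eq_sum hμ.1 p fun _ _ => (Fintype.card β : ℝ)⁻¹]
  set δ : α → ℝ := fun a => 2 * statDist (p a) fun _ => (Fintype.card β : ℝ)⁻¹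
  have hjensen : (∑ a, μ a * δ a) ^ 2 ≤ ∑ a, μ a * δ a ^ 2 := by
    simpa using (even_two.convexOn_pow (𝕜 := ℝ)).map_sum_le (fun a _ => hμ.1 a) hμ.2
      (p := δ) fun _ _ => Set.mem_univ _
  have hδ : ∑ a, μ a * δ a ^ 2 ≤ ∑ a, μ a * (Fintype.card β * ∑ b, p a b ^ 2 - 1) :=
    sum_le_sum fun a _ =>
      mul_le_mul_of_nonneg_left (sq_two_mul_statDist_uniform_le (hp a)) (hμ.1 a)
  have hmean : ∑ a, μ a * (Fintype.card β * ∑ b, p a b ^ 2 - 1)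
      = Fintype.card β * ∑ a, μ a * ∑ b, p a b ^ 2 - 1 := by
    simp only [mul_sub, mul_one, sum_sub_distrib, hμ.2, mul_sum, mul_left_comm]
  calc ∑ a, μ a * statDist (p a) (fun _ => (Fintype.card β : ℝ)⁻¹)
      = 1 / 2 * ∑ a, μ a * δ a := by
        simp only [δ, mul_sum]; congr 1; ext a; ring
    _ ≤ 1 / 2 * Real.sqrt (Fintype.card β * ∑ a, μ a * ∑ b, p a b ^ 2 - 1) := by
        gcongr
        exact (le_abs_self _).trans (Real.abs_le_sqrt (hjensen.trans (hδ.trans_eq hmean)))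

end

section

variable {β γ : Type*} [Fintype β] [Fintype γ] [DecidableEq β]

theorem sum_sum_ite_comp_eq (h : γ → β) (ν : γ → ℝ) :
    ∑ b, ∑ x, (if h x = b then ν x else 0) = ∑ x, ν x := by
  rw [sum_comm]
  simp

theorem sum_sq_sum_ite_comp_eq (h : γ → β) (ν : γ → ℝ) :
    ∑ b, (∑ x, if h x = b then ν x else 0) ^ 2
      = ∑ x, ∑ x', if h x = h x' then ν x * ν x' else 0 := by
  simp only [sq, sum_mul_sum]
  rw [sum_comm]
  refine sum_congr rfl fun x _ => ?_
  rw [sum_comm]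
  refine sum_congr rfl fun x' _ => ?_
  simp [ite_mul, mul_ite, eq_comm]

end

/-- Collision probability vs statistical distance: for a distribution `μ` on
functions `h : {0,1}^n → {0,1}^m` and a distribution `ν` on inputs, the
statistical distance between `(H, H(X))` and `(H, U)` is at most
`(1/2)·√(2^m · Pr[H(X) = H(X')] − 1)`. -/
theorem stmt0 (n m : ℕ)
    (μ : ((Fin n → Bool) → (Fin m → Bool)) → ℝ) (ν : (Fin n → Bool) → ℝ)
    (hμ : IsDist μ) (hν : IsDist ν) :
    statDist
      (fun q : ((Fin n → Bool) → (Fin m → Bool)) × (Fin m → Bool) =>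
        μ q.1 * ∑ x, if q.1 x = q.2 then ν x else 0)
      (fun q => μ q.1 * ((2 : ℝ) ^ m)⁻¹)
    ≤ (1 / 2) * Real.sqrt ((2 : ℝ) ^ m *
        (∑ h, ∑ x, ∑ x', if h x = h x' then μ h * ν x * ν x' else 0) - 1) := by
  have hcard : (Fintype.card (Fin m → Bool) : ℝ) = 2 ^ m := by simp
  have hcollision : ∑ h, ∑ x, ∑ x', (if h x = h x' then μ h * ν x * ν x' else 0)
      = ∑ h, μ h * ∑ y, (∑ x, if h x = y then ν x else 0) ^ 2 := by
    simp only [sum_sq_sum_ite_comp_eq, mul_sum, mul_ite, mul_zero, mul_assoc]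
  rw [hcollision, ← hcard]
  exact statDist_mul_fst_uniform_le hμ (p := fun h y => ∑ x, if h x = y then ν x else 0)
    fun h => (sum_sum_ite_comp_eq h ν).trans hν.2
end

section
/- Let S ⊆ {0,1}^n with |S| = 2^k, let p ∈ (0,1/2), and let i ≥ 1 and B ≥ 1 be real. Then E_{y∼S}[(1−2p)^{i|y|}] ≤ ((1 + (1−2p)^{Bi})^n / |S|)^{1/B}, where y is uniform on S and |y| is Hamming weight. -/
open Finset

/-- Hamming weight of a Boolean vector. -/
def wtB {n : ℕ} (y : Fin n → Bool) : ℕ := (univ.filter (fun i => y i)).card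

/-!
By the power-mean (Hölder) inequality the mean of `(1-2p)^{i|y|}` over `S` is at most
`(|S|⁻¹ ∑_{y ∈ S} (1-2p)^{Bi|y|})^{1/B}`. The summands are nonnegative, so the sum over `S`
is at most the sum over the whole cube, which is the binomial expansion of `(1 + (1-2p)^{Bi})^n`.
-/

theorem sum_pow_wtB {R : Type*} [CommSemiring R] (n : ℕ) (x : R) :
    ∑ y : Fin n → Bool, x ^ wtB y = (1 + x) ^ n := by
  have hprod : ∀ y : Fin n → Bool, x ^ wtB y = ∏ j, if y j then x else 1 := fun y => by
    rw [wtB, ← prod_const, prod_filter]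
  simp_rw [hprod, ← Fintype.prod_sum (fun (_ : Fin n) (b : Bool) => if b then x else 1)]
  simp [add_comm]

theorem sum_rpow_mul_wtB_le {n : ℕ} (S : Finset (Fin n → Bool)) {c : ℝ} (hc : 0 ≤ c) (e : ℝ) :
    ∑ y ∈ S, c ^ (e * (wtB y : ℝ)) ≤ (1 + c ^ e) ^ n := by
  calc ∑ y ∈ S, c ^ (e * (wtB y : ℝ))
      ≤ ∑ y, c ^ (e * (wtB y : ℝ)) :=
        sum_le_sum_of_subset_of_nonneg (subset_univ S) fun y _ _ => by positivity
    _ = (1 + c ^ e) ^ n := by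
        simp_rw [Real.rpow_mul hc, Real.rpow_natCast]
        exact sum_pow_wtB n _

theorem inv_card_mul_sum_le_rpow_inv_card_mul_sum_rpow {ι : Type*} {s : Finset ι}
    (hs : s.Nonempty) {f : ι → ℝ} (hf : ∀ j ∈ s, 0 ≤ f j) {p : ℝ} (hp : 1 ≤ p) :
    (#s : ℝ)⁻¹ * ∑ j ∈ s, f j ≤ ((#s : ℝ)⁻¹ * ∑ j ∈ s, f j ^ p) ^ (1 / p) := by
  have hcard : (#s : ℝ)⁻¹ * #s = 1 := inv_mul_cancel₀ (by exact_mod_cast hs.card_ne_zero)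
  simpa only [mul_sum] using Real.arith_mean_le_rpow_mean s (fun _ => (#s : ℝ)⁻¹) f
    (fun _ _ => by positivity) (by rwa [sum_const, nsmul_eq_mul, mul_comm]) hf hp

theorem stmt4_general (n k : ℕ) (S : Finset (Fin n → Bool)) (hS : S.card = 2 ^ k)
    (p : ℝ) (hp : p ∈ Set.Ioo (0:ℝ) (1/2)) (i B : ℝ) (hB : 1 ≤ B) :
    (S.card : ℝ)⁻¹ * ∑ y ∈ S, (1 - 2*p) ^ (i * (wtB y : ℝ)) ≤
      ((1 + (1 - 2*p) ^ (B * i)) ^ n / (S.card : ℝ)) ^ (1/B) := by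
  have hc : 0 ≤ 1 - 2 * p := by linarith [hp.2]
  have hS₀ : S.Nonempty := card_pos.mp (by rw [hS]; positivity)
  refine (inv_card_mul_sum_le_rpow_inv_card_mul_sum_rpow hS₀
    (fun y _ => by positivity) hB).trans ?_
  gcongr
  rw [div_eq_inv_mul]
  gcongr
  calc ∑ y ∈ S, ((1 - 2 * p) ^ (i * (wtB y : ℝ))) ^ B
      = ∑ y ∈ S, (1 - 2 * p) ^ (B * i * (wtB y : ℝ)) := sum_congr rfl fun y _ => by
        rw [← Real.rpow_mul hc]; ring_nf
    _ ≤ (1 + (1 - 2 * p) ^ (B * i)) ^ n := sum_rpow_mul_wtB_le S hc (B * i)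

/-- Hölder bound: for `S ⊆ {0,1}^n` of size `2^k`, `p ∈ (0,1/2)` and real
`i ≥ 1`, `B ≥ 1`,
`E_{y∼S}[(1−2p)^{i|y|}] ≤ ((1+(1−2p)^{Bi})^n / |S|)^{1/B}`. -/
theorem stmt4 (n k : ℕ) (S : Finset (Fin n → Bool)) (hS : S.card = 2 ^ k)
    (p : ℝ) (hp : p ∈ Set.Ioo (0:ℝ) (1/2)) (i B : ℝ) (hi : 1 ≤ i) (hB : 1 ≤ B) :
    (S.card : ℝ)⁻¹ * ∑ y ∈ S, (1 - 2*p) ^ (i * (wtB y : ℝ)) ≤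
      ((1 + (1 - 2*p) ^ (B * i)) ^ n / (S.card : ℝ)) ^ (1/B) :=
  stmt4_general n k S hS p hp i B hB
end

section
/- Let Z₁,…,Z_m be {0,1}-valued random variables that are a read-t family of independent random variables X₁,…,X_n (each Xᵢ affects at most t of the Z_j's), and let Z = Z₁+⋯+Z_m. Then for every ε > 0, Pr[Z ≥ E[Z] + εm] ≤ exp(−2ε²m/t). -/
/-
Chernoff's method: `Pr[Z ≥ E Z + εm] ≤ e^{-λ(E Z + εm)} E[∏ⱼ e^{λZⱼ}]`. The read-`t` structure
replaces independence of the factors by the Hölder-type bound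
`E[∏ⱼ fⱼ] ≤ ∏ⱼ (E fⱼᵗ)^{1/t}` for nonnegative `fⱼ`, each `Xᵢ` affecting at most `t` of them;
it is proved by integrating out one `Xᵢ` at a time and applying the finite Hölder inequality
to the at most `t` factors that depend on it. Each `E[e^{λtZⱼ}]^{1/t}` is then bounded by
Hoeffding's lemma, and `λ = 4ε/t` optimizes the resulting exponent.
-/

open Finset
open MeasureTheory ProbabilityTheory

lemma one_sub_add_mul_exp_le {p : ℝ} (hp0 : 0 ≤ p) (hp1 : p ≤ 1) (s : ℝ) :
    1 - p + p * Real.exp s ≤ Real.exp (p * s + s ^ 2 / 8) := by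
  set μ : Measure ℝ := bernoulliMeasure 1 0 ⟨p, hp0, hp1⟩
  have hsupp : ∀ᵐ x ∂μ, x ∈ Set.Icc (0 : ℝ) 1 :=
    ae_add_measure_iff.2 ⟨Measure.ae_smul_measure (by simp) _,
      Measure.ae_smul_measure (by simp) _⟩
  have hoeffding := (hasSubgaussianMGF_of_mem_Icc aemeasurable_id hsupp).mgf_le s
  simp only [mgf, μ, integral_bernoulliMeasure, id, smul_eq_mul] at hoeffding
  norm_num at hoeffding
  have hshift : Real.exp (p * s) * Real.exp (-(s * p)) = 1 := by
    rw [← Real.exp_add]; ring_nf; exact Real.exp_zero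
  have hsplit : Real.exp (s * (1 - p)) = Real.exp s * Real.exp (-(s * p)) := by
    rw [← Real.exp_add]; ring_nf
  calc 1 - p + p * Real.exp s
      = Real.exp (p * s) * (p * Real.exp (s * (1 - p)) + (1 - p) * Real.exp (-(s * p))) := by
        rw [hsplit]; linear_combination (-(1 - p + p * Real.exp s)) * hshift
    _ ≤ Real.exp (p * s) * Real.exp (s ^ 2 / 8) := by gcongr; exact hoeffding.trans_eq (by ring_nf)
    _ = Real.exp (p * s + s ^ 2 / 8) := (Real.exp_add _ _).symm

lemma sum_mul_prod_le_prod_rpow {α ι : Type*} [Fintype α] {p : α → ℝ} (hp : ∀ x, 0 ≤ p x)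
    (hp1 : ∑ x, p x = 1) {t : ℕ} (ht : 0 < t) {T : Finset ι} (hT : #T ≤ t)
    {g : ι → α → ℝ} (hg : ∀ j x, 0 ≤ g j x) :
    ∑ x, p x * ∏ j ∈ T, g j x ≤ ∏ j ∈ T, (∑ x, p x * g j x ^ t) ^ (t⁻¹ : ℝ) := by
  let _ : MeasurableSpace α := ⊤
  let μ : Measure α := Measure.count.withDensity fun x => ENNReal.ofReal (p x)
  have hμ : ∀ F : α → ENNReal, ∫⁻ x, F x ∂μ = ∑ x, ENNReal.ofReal (p x) * F x := fun F => by
    rw [lintegral_withDensity_eq_lintegral_mul _ .of_discrete .of_discrete, lintegral_count,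
      tsum_fintype]
    rfl
  have htR : (0 : ℝ) < t := by exact_mod_cast ht
  have hgt : ∀ j x, 0 ≤ g j x ^ t := fun j x => pow_nonneg (hg j x) t
  have hmoment : ∀ j, 0 ≤ ∑ x, p x * g j x ^ t := fun j =>
    sum_nonneg fun x _ => mul_nonneg (hp x) (hgt j x)
  -- Hölder with exponent `1/t` on each `g j ^ t` and the remaining `1 - #T/t` on the constant `1`.
  have holder := ENNReal.lintegral_mul_prod_norm_pow_le (μ := μ) T (g := fun _ => 1)
    (f := fun j x => ENNReal.ofReal (g j x ^ t)) aemeasurable_const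
    (fun _ _ => .of_discrete) (1 - #T / t) (p := fun _ => (t⁻¹ : ℝ))
    (by simp only [sum_const, nsmul_eq_mul]; ring)
    (by rw [sub_nonneg, div_le_one htR]; exact_mod_cast hT)
    (fun _ _ => by positivity)
  have hroot : ∀ j x, ENNReal.ofReal (g j x ^ t) ^ (t⁻¹ : ℝ) = ENNReal.ofReal (g j x) :=
    fun j x => by rw [ENNReal.ofReal_rpow_of_nonneg (hgt j x) (by positivity),
      Real.pow_rpow_inv_natCast (hg j x) ht.ne']
  have hmass : ∑ x, ENNReal.ofReal (p x) * 1 = 1 := by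
    simp_rw [mul_one]
    rw [← ENNReal.ofReal_sum_of_nonneg fun x _ => hp x, hp1, ENNReal.ofReal_one]
  simp only [hμ, ENNReal.one_rpow, one_mul, hmass, hroot] at holder
  rw [← ENNReal.ofReal_le_ofReal_iff (prod_nonneg fun j _ => Real.rpow_nonneg (hmoment j) _),
    ENNReal.ofReal_sum_of_nonneg fun x _ => mul_nonneg (hp x) (prod_nonneg fun j _ => hg j x),
    ENNReal.ofReal_prod_of_nonneg fun j _ => Real.rpow_nonneg (hmoment j) _]
  refine (holder.trans_eq' ?_).trans_eq ?_
  · refine sum_congr rfl fun x _ => ?_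
    rw [ENNReal.ofReal_mul (hp x), ENNReal.ofReal_prod_of_nonneg fun j _ => hg j x]
  · refine prod_congr rfl fun j _ => ?_
    rw [← ENNReal.ofReal_rpow_of_nonneg (hmoment j) (inv_nonneg.2 htR.le),
      ENNReal.ofReal_sum_of_nonneg fun x _ => mul_nonneg (hp x) (hgt j x)]
    simp_rw [ENNReal.ofReal_mul (hp _)]

lemma prod_apply_update {ι : Type*} [Fintype ι] [DecidableEq ι] {Ω : ι → Type*}
    (ν : ∀ i, Ω i → ℝ) (σ : ∀ i, Ω i) (a : ι) (x : Ω a) :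
    ∏ i, ν i (Function.update σ a x i) = ν a x * ∏ i ∈ univ.erase a, ν i (σ i) := by
  rw [← mul_prod_erase univ _ (mem_univ a), Function.update_self]
  congr 1
  exact prod_congr rfl fun i hi => by rw [Function.update_of_ne (ne_of_mem_erase hi)]

section ReadFamily

variable {ι : Type*} [DecidableEq ι] {Ω : ι → Type*} [∀ i, Fintype (Ω i)] {ν : ∀ i, Ω i → ℝ}
  {κ : Type*} [Fintype κ] {t : ℕ}

variable (ν) in
noncomputable def averageAt (a : ι) (F : (∀ i, Ω i) → ℝ) (σ : ∀ i, Ω i) : ℝ :=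
  ∑ x, ν a x * F (Function.update σ a x)

lemma DependsOn.averageAt {F : (∀ i, Ω i) → ℝ} {s : Finset ι} (hF : DependsOn F s) (a : ι) :
    DependsOn (averageAt ν a F) (s.erase a) := fun σ τ h => by
  simp only [_root_.averageAt]
  exact sum_congr rfl fun x _ => congrArg _ (hF.update a x h)

lemma averageAt_prod_le {a : ι} (hν0 : ∀ x, 0 ≤ ν a x) (hν1 : ∑ x, ν a x = 1) (ht : 0 < t)
    {S : κ → Finset ι} (hread : #{j | a ∈ S j} ≤ t) {f : κ → (∀ i, Ω i) → ℝ}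
    (hf0 : ∀ j σ, 0 ≤ f j σ) (hf : ∀ j, DependsOn (f j) (S j)) (σ : ∀ i, Ω i) :
    averageAt ν a (fun τ => ∏ j, f j τ) σ ≤
      ∏ j, if a ∈ S j then averageAt ν a (fun τ => f j τ ^ t) σ ^ (t⁻¹ : ℝ) else f j σ := by
  have hfree : ∀ j, a ∉ S j → ∀ x, f j (Function.update σ a x) = f j σ := fun j hj x =>
    hf j fun i hi => Function.update_of_ne (ne_of_mem_of_not_mem hi hj) _ _
  have hsplit : ∀ x, ∏ j, f j (Function.update σ a x) =
      (∏ j with a ∈ S j, f j (Function.update σ a x)) * ∏ j with a ∉ S j, f j σ := fun x => by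
    rw [← prod_filter_mul_prod_filter_not univ (fun j => a ∈ S j)]
    exact congrArg _ (prod_congr rfl fun j hj => hfree j (mem_filter.1 hj).2 x)
  rw [prod_ite]
  simp only [averageAt, hsplit, ← mul_assoc, ← sum_mul]
  exact mul_le_mul_of_nonneg_right
    (sum_mul_prod_le_prod_rpow hν0 hν1 ht hread fun j x => hf0 j _)
    (prod_nonneg fun j _ => hf0 j σ)

variable [Fintype ι]

variable (ν) in
noncomputable def expectPi (F : (∀ i, Ω i) → ℝ) : ℝ :=
  ∑ σ, (∏ i, ν i (σ i)) * F σ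

lemma sum_prod_weight_eq_one (hν1 : ∀ i, ∑ x, ν i x = 1) :
    ∑ σ : ∀ i, Ω i, ∏ i, ν i (σ i) = 1 := by
  rw [← Fintype.prod_sum, prod_eq_one fun i _ => hν1 i]

lemma expectPi_mono (hν0 : ∀ i x, 0 ≤ ν i x) {F G : (∀ i, Ω i) → ℝ} (h : ∀ σ, F σ ≤ G σ) :
    expectPi ν F ≤ expectPi ν G :=
  sum_le_sum fun σ _ => mul_le_mul_of_nonneg_left (h σ) (prod_nonneg fun i _ => hν0 i _)

lemma expectPi_nonneg (hν0 : ∀ i x, 0 ≤ ν i x) {F : (∀ i, Ω i) → ℝ} (hF : ∀ σ, 0 ≤ F σ) :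
    0 ≤ expectPi ν F :=
  sum_nonneg fun σ _ => mul_nonneg (prod_nonneg fun i _ => hν0 i _) (hF σ)

lemma expectPi_const (hν1 : ∀ i, ∑ x, ν i x = 1) (c : ℝ) : expectPi ν (fun _ => c) = c := by
  rw [expectPi, ← sum_mul, sum_prod_weight_eq_one hν1, one_mul]

lemma expectPi_sum (F : κ → (∀ i, Ω i) → ℝ) :
    expectPi ν (fun σ => ∑ j, F j σ) = ∑ j, expectPi ν (F j) := by
  simp only [expectPi, mul_sum]
  exact sum_comm

lemma expectPi_averageAt {a : ι} (hν1 : ∑ x, ν a x = 1) (F : (∀ i, Ω i) → ℝ) :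
    expectPi ν (averageAt ν a F) = expectPi ν F := by
  let swap : (∀ i, Ω i) × Ω a → (∀ i, Ω i) × Ω a := fun q => (Function.update q.1 a q.2, q.1 a)
  have hswap : Function.Involutive swap := fun q => by simp [swap]
  calc expectPi ν (averageAt ν a F)
      = ∑ q : (∀ i, Ω i) × Ω a,
          (∏ i, ν i (q.1 i)) * (ν a q.2 * F (Function.update q.1 a q.2)) := by
        simp only [expectPi, averageAt, Fintype.sum_prod_type, mul_sum]
    _ = ∑ q : (∀ i, Ω i) × Ω a,
          (∏ i, ν i (Function.update q.1 a q.2 i)) * (ν a (q.1 a) * F q.1) :=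
        Fintype.sum_equiv (hswap.toPerm swap) _ _ fun q => by simp [swap]
    _ = ∑ σ, (∑ x, ν a x) * (∏ i ∈ univ.erase a, ν i (σ i)) * ν a (σ a) * F σ := by
        simp only [Fintype.sum_prod_type, prod_apply_update, sum_mul]
        exact sum_congr rfl fun σ _ => sum_congr rfl fun x _ => by ring
    _ = expectPi ν F := by
        simp only [hν1, one_mul, expectPi]
        exact sum_congr rfl fun σ _ => by rw [← mul_prod_erase univ _ (mem_univ a)]; ring

theorem expectPi_prod_le_prod_rpow (hν0 : ∀ i x, 0 ≤ ν i x) (hν1 : ∀ i, ∑ x, ν i x = 1)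
    (ht : 0 < t) {S : κ → Finset ι} (hread : ∀ i, #{j | i ∈ S j} ≤ t)
    {f : κ → (∀ i, Ω i) → ℝ} (hf0 : ∀ j σ, 0 ≤ f j σ) (hf : ∀ j, DependsOn (f j) (S j)) :
    expectPi ν (fun σ => ∏ j, f j σ) ≤ ∏ j, expectPi ν (fun σ => f j σ ^ t) ^ (t⁻¹ : ℝ) := by
  -- Induct on a set `D` of coordinates containing every `S j`. Averaging out `a ∈ D` replaces each
  -- factor with `a ∈ S j` by its `Lᵗ` norm in the coordinate `a`, which no longer depends on `a`.
  suffices key : ∀ D : Finset ι, ∀ S : κ → Finset ι, (∀ j, S j ⊆ D) →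
      (∀ i, #{j | i ∈ S j} ≤ t) → ∀ f : κ → (∀ i, Ω i) → ℝ, (∀ j σ, 0 ≤ f j σ) →
      (∀ j, DependsOn (f j) (S j)) →
      expectPi ν (fun σ => ∏ j, f j σ) ≤ ∏ j, expectPi ν (fun σ => f j σ ^ t) ^ (t⁻¹ : ℝ) from
    key univ S (fun j => subset_univ _) hread f hf0 hf
  intro D
  induction D using Finset.induction_on with
  | empty =>
    intro S hS _ f hf0 hf
    obtain ⟨σ₀, -, -⟩ := exists_ne_zero_of_sum_ne_zero (s := univ)
      (f := fun σ : ∀ i, Ω i => ∏ i, ν i (σ i))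
      (by rw [sum_prod_weight_eq_one hν1]; exact one_ne_zero)
    have hconst : ∀ j σ, f j σ = f j σ₀ := fun j σ =>
      ((hf j).mono (by simpa using hS j)).empty σ σ₀
    simp only [hconst, expectPi_const hν1, Real.pow_rpow_inv_natCast (hf0 _ _) ht.ne', le_refl]
  | insert a D ha ih =>
    intro S hS hread f hf0 hf
    have havg0 : ∀ j σ, 0 ≤ averageAt ν a (fun τ => f j τ ^ t) σ := fun j σ =>
      sum_nonneg fun x _ => mul_nonneg (hν0 a x) (pow_nonneg (hf0 j _) t)
    let g j σ := if a ∈ S j then averageAt ν a (fun τ => f j τ ^ t) σ ^ (t⁻¹ : ℝ) else f j σ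
    have hg0 : ∀ j σ, 0 ≤ g j σ := fun j σ => by
      by_cases h : a ∈ S j
      · simp only [g, h, if_true]; exact Real.rpow_nonneg (havg0 j σ) _
      · simp only [g, h, if_false]; exact hf0 j σ
    have hg : ∀ j, DependsOn (g j) ((S j).erase a) := fun j => by
      by_cases h : a ∈ S j
      · have hft : DependsOn (fun σ => f j σ ^ t) (S j) := fun σ τ hστ =>
          congrArg (· ^ t) (hf j hστ)
        simp only [g, h, if_true]
        exact fun σ τ hστ => congrArg (· ^ (t⁻¹ : ℝ)) (hft.averageAt a hστ)
      · simpa only [g, h, if_false, erase_eq_of_notMem h] using hf j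
    have hgt : ∀ j, expectPi ν (fun σ => g j σ ^ t) = expectPi ν (fun σ => f j σ ^ t) := by
      intro j
      by_cases h : a ∈ S j
      · simp only [g, h, if_true, Real.rpow_inv_natCast_pow (havg0 j _) ht.ne']
        exact expectPi_averageAt (hν1 a) _
      · simp only [g, h, if_false]
    have hread' : ∀ i, #{j | i ∈ (S j).erase a} ≤ t := fun i =>
      (card_le_card (monotone_filter_right univ fun j _ => mem_of_mem_erase)).trans (hread i)
    calc expectPi ν (fun σ => ∏ j, f j σ)
        = expectPi ν (averageAt ν a fun σ => ∏ j, f j σ) := (expectPi_averageAt (hν1 a) _).symm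
      _ ≤ expectPi ν (fun σ => ∏ j, g j σ) :=
        expectPi_mono hν0 (averageAt_prod_le (hν0 a) (hν1 a) ht (hread a) hf0 hf)
      _ ≤ ∏ j, expectPi ν (fun σ => g j σ ^ t) ^ (t⁻¹ : ℝ) :=
        ih _ (fun j => subset_insert_iff.1 (hS j)) hread' g hg0 hg
      _ = ∏ j, expectPi ν (fun σ => f j σ ^ t) ^ (t⁻¹ : ℝ) := by simp only [hgt]

lemma sum_ite_le_exp_mul_expectPi (hν0 : ∀ i x, 0 ≤ ν i x) (X : (∀ i, Ω i) → ℝ) (c : ℝ)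
    {s : ℝ} (hs : 0 ≤ s) :
    (∑ σ, if c ≤ X σ then ∏ i, ν i (σ i) else 0) ≤
      Real.exp (-(s * c)) * expectPi ν (fun σ => Real.exp (s * X σ)) := by
  rw [expectPi, mul_sum]
  refine sum_le_sum fun σ _ => ?_
  have hw : 0 ≤ ∏ i, ν i (σ i) := prod_nonneg fun i _ => hν0 i _
  split_ifs with h
  · have : 1 ≤ Real.exp (-(s * c)) * Real.exp (s * X σ) := by
      rw [← Real.exp_add]; exact Real.one_le_exp (by nlinarith)
    nlinarith
  · positivity

lemma expectPi_exp_mul_of_zero_or_one (hν1 : ∀ i, ∑ x, ν i x = 1) {X : (∀ i, Ω i) → ℝ}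
    (hX : ∀ σ, X σ = 0 ∨ X σ = 1) (s : ℝ) :
    expectPi ν (fun σ => Real.exp (s * X σ)) = 1 - expectPi ν X + expectPi ν X * Real.exp s := by
  have hlin : ∀ σ, Real.exp (s * X σ) = 1 - X σ + X σ * Real.exp s := fun σ => by
    rcases hX σ with h | h <;> simp [h]
  simp only [hlin, expectPi, mul_add, mul_sub, sum_add_distrib, sum_sub_distrib, mul_one,
    sum_prod_weight_eq_one hν1, ← mul_assoc, ← sum_mul]

lemma expectPi_exp_pow_rpow_le (hν0 : ∀ i x, 0 ≤ ν i x) (hν1 : ∀ i, ∑ x, ν i x = 1)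
    (ht : 0 < t) {X : (∀ i, Ω i) → ℝ} (hX : ∀ σ, X σ = 0 ∨ X σ = 1) (s : ℝ) :
    expectPi ν (fun σ => Real.exp (s * X σ) ^ t) ^ (t⁻¹ : ℝ) ≤
      Real.exp (expectPi ν X * s + s ^ 2 * t / 8) := by
  set p := expectPi ν X
  have hp0 : 0 ≤ p := expectPi_nonneg hν0 fun σ => by rcases hX σ with h | h <;> simp [h]
  have hp1 : p ≤ 1 := expectPi_const hν1 1 ▸ expectPi_mono hν0 fun σ => by
    rcases hX σ with h | h <;> simp [h]
  have htR : (0 : ℝ) < t := by exact_mod_cast ht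
  simp_rw [← Real.exp_nat_mul, ← mul_assoc, mul_comm (t : ℝ) s]
  rw [expectPi_exp_mul_of_zero_or_one hν1 hX]
  calc (1 - p + p * Real.exp (s * t)) ^ (t⁻¹ : ℝ)
      ≤ Real.exp (p * (s * t) + (s * t) ^ 2 / 8) ^ (t⁻¹ : ℝ) :=
        Real.rpow_le_rpow (by nlinarith [Real.exp_pos (s * t)]) (one_sub_add_mul_exp_le hp0 hp1 _)
          (by positivity)
    _ = Real.exp (p * s + s ^ 2 * t / 8) := by
        rw [← Real.exp_mul]; congr 1; field_simp

theorem expectPi_exp_sum_le (hν0 : ∀ i x, 0 ≤ ν i x)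
    (hν1 : ∀ i, ∑ x, ν i x = 1) (ht : 0 < t) {S : κ → Finset ι}
    (hread : ∀ i, #{j | i ∈ S j} ≤ t) {Z : κ → (∀ i, Ω i) → ℝ}
    (hZ01 : ∀ j σ, Z j σ = 0 ∨ Z j σ = 1) (hZ : ∀ j, DependsOn (Z j) (S j)) (s : ℝ) :
    expectPi ν (fun σ => Real.exp (s * ∑ j, Z j σ)) ≤
      Real.exp (s * expectPi ν (fun σ => ∑ j, Z j σ) + Fintype.card κ * (s ^ 2 * t / 8)) := by
  calc expectPi ν (fun σ => Real.exp (s * ∑ j, Z j σ))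
      = expectPi ν (fun σ => ∏ j, Real.exp (s * Z j σ)) := by simp only [mul_sum, Real.exp_sum]
    _ ≤ ∏ j, expectPi ν (fun σ => Real.exp (s * Z j σ) ^ t) ^ (t⁻¹ : ℝ) :=
        expectPi_prod_le_prod_rpow hν0 hν1 ht hread (fun j σ => (Real.exp_pos _).le)
          fun j σ τ h => congrArg (fun z => Real.exp (s * z)) (hZ j h)
    _ ≤ ∏ j, Real.exp (expectPi ν (Z j) * s + s ^ 2 * t / 8) :=
        prod_le_prod (fun j _ => Real.rpow_nonneg (expectPi_nonneg hν0 fun σ => by positivity) _)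
          fun j _ => expectPi_exp_pow_rpow_le hν0 hν1 ht (hZ01 j) s
    _ = _ := by
        rw [← Real.exp_sum, sum_add_distrib, ← sum_mul, ← expectPi_sum, sum_const, card_univ,
          nsmul_eq_mul, mul_comm]

end ReadFamily

/-- Tail bound for read-`t` families (Gavinsky et al.): if `Z₁,…,Z_m` are
{0,1}-valued functions of independent random variables `X₁,…,X_n` where each
`X_i` affects at most `t` of the `Z_j`'s, and `Z = Z₁+⋯+Z_m`, then
`Pr[Z ≥ E[Z] + εm] ≤ exp(−2ε²m/t)`. -/
theorem stmt9 (n m t : ℕ) (ht : 0 < t)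
    (Ω : Fin n → Type) [∀ i, Fintype (Ω i)]
    (ν : ∀ i, Ω i → ℝ)
    (hν : ∀ i, (∀ a, 0 ≤ ν i a) ∧ ∑ a, ν i a = 1)
    (S : Fin m → Finset (Fin n))
    (Z : Fin m → (∀ i, Ω i) → ℝ)
    (hZ01 : ∀ j ω, Z j ω = 0 ∨ Z j ω = 1)
    (hdep : ∀ j ω ω', (∀ i ∈ S j, ω i = ω' i) → Z j ω = Z j ω')
    (hread : ∀ i, (univ.filter (fun j => i ∈ S j)).card ≤ t)
    (ε : ℝ) (hε : 0 < ε) :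
    (∑ ω : ∀ i, Ω i,
        if (∑ ω' : ∀ i, Ω i, (∏ i, ν i (ω' i)) * ∑ j, Z j ω') + ε * m ≤ ∑ j, Z j ω
        then ∏ i, ν i (ω i) else 0)
      ≤ Real.exp (-2 * ε^2 * m / t) := by
  have hν0 : ∀ i a, 0 ≤ ν i a := fun i => (hν i).1
  have hν1 : ∀ i, ∑ a, ν i a = 1 := fun i => (hν i).2
  have htR : (0 : ℝ) < t := by exact_mod_cast ht
  set μ := expectPi ν (fun ω => ∑ j, Z j ω)
  set s := 4 * ε / t with hs
  calc _ ≤ Real.exp (-(s * (μ + ε * m))) * expectPi ν (fun ω => Real.exp (s * ∑ j, Z j ω)) :=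
        sum_ite_le_exp_mul_expectPi hν0 _ _ (by positivity)
    _ ≤ Real.exp (-(s * (μ + ε * m))) * Real.exp (s * μ + m * (s ^ 2 * t / 8)) := by
        gcongr
        simpa using expectPi_exp_sum_le hν0 hν1 ht hread hZ01 (fun j _ _ h => hdep j _ _ h) s
    _ = Real.exp (-2 * ε ^ 2 * m / t) := by
        rw [← Real.exp_add, hs]; congr 1; field_simp; ring
end

section
/- Let M be a random m×n matrix over GF(2) with i.i.d. entries that are 1 with probability p ≤ 1/2, let S₀ ⊆ {0,1}^n with |S₀| = 2^k, and let Y be uniform on S₀. Then for every T ⊆ [m] with |T| ≥ t, |E_{M,Y}[(−1)^{Σ_{i∈T} M_i Y}]| ≤ (1 + (1−2p)^t)^n / 2^k ≤ e^{n·e^{−2pt}} / 2^k. -/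
open Finset
open scoped Classical

/-!
For fixed `y`, the exponent `∑_{i∈T} M_i y` is a sum of the independent entries `M i j` with
`i ∈ T` and `y j ≠ 0`, each contributing `E[(−1)^{M i j}] = 1 − 2p`; so averaging over `M` first
gives the nonnegative quantity `((1 − 2p)^{|y|})^{|T|}`. Lowering `|T|` to `t` and extending the
sum over `S₀` to all of `{0,1}^n` yields `∑_y ((1 − 2p)^t)^{|y|} = (1 + (1 − 2p)^t)^n`; the
exponential bound is `1 + x ≤ eˣ`, used twice.
-/

/-- The character `(−1)^z` of GF(2). -/
noncomputable def chi (z : ZMod 2) : ℝ := if z = 0 then 1 else -1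

lemma ZMod.two_eq_zero_or_eq_one : ∀ x : ZMod 2, x = 0 ∨ x = 1 := by
  decide

lemma sum_zmod_two {M : Type*} [AddCommMonoid M] (f : ZMod 2 → M) :
    ∑ x, f x = f 0 + f 1 :=
  Fin.sum_univ_two f

lemma chi_add (a b : ZMod 2) : chi (a + b) = chi a * chi b := by
  rcases ZMod.two_eq_zero_or_eq_one a with rfl | rfl <;>
    rcases ZMod.two_eq_zero_or_eq_one b with rfl | rfl <;>
    simp [chi, show (1 : ZMod 2) + 1 = 0 from rfl]

lemma chi_sum {ι : Type*} (s : Finset ι) (f : ι → ZMod 2) :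
    chi (∑ i ∈ s, f i) = ∏ i ∈ s, chi (f i) := by
  induction s using Finset.cons_induction with
  | empty => simp [chi]
  | cons a s ha ih => rw [sum_cons, prod_cons, chi_add, ih]

lemma pow_hammingNorm_eq_prod {ι β M : Type*} [Fintype ι] [Zero β] [DecidableEq β]
    [CommMonoid M] (a : M) (y : ι → β) : a ^ hammingNorm y = ∏ i, if y i = 0 then 1 else a := by
  rw [hammingNorm, ← prod_const, prod_filter]
  simp only [ite_not]

lemma sum_pow_hammingNorm {ι R : Type*} [Fintype ι] [DecidableEq ι] [CommSemiring R] (a : R) :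
    ∑ y : ι → ZMod 2, a ^ hammingNorm y = (1 + a) ^ Fintype.card ι := by
  simp only [pow_hammingNorm_eq_prod]
  rw [← Fintype.prod_sum fun (_ : ι) (x : ZMod 2) => if x = 0 then 1 else a]
  simp [sum_zmod_two]

lemma sum_bernoulli_mul_chi_mul (p : ℝ) (a : ZMod 2) :
    ∑ x : ZMod 2, (if x = 1 then p else 1 - p) * chi (x * a) =
      if a = 0 then 1 else 1 - 2 * p := by
  rw [sum_zmod_two]
  rcases ZMod.two_eq_zero_or_eq_one a with rfl | rfl <;> simp [chi]
  ring

lemma sum_pow_pow_hammingNorm_le {κ : Type*} [Fintype κ] [DecidableEq κ] {a : ℝ} (ha₀ : 0 ≤ a)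
    (ha₁ : a ≤ 1) {s t : ℕ} (hts : t ≤ s) (S : Finset (κ → ZMod 2)) :
    ∑ y ∈ S, (a ^ hammingNorm y) ^ s ≤ (1 + a ^ t) ^ Fintype.card κ :=
  calc ∑ y ∈ S, (a ^ hammingNorm y) ^ s
      ≤ ∑ y ∈ S, (a ^ t) ^ hammingNorm y := sum_le_sum fun y _ => by
        rw [← pow_mul, ← pow_mul, mul_comm]
        exact pow_le_pow_of_le_one ha₀ ha₁ (Nat.mul_le_mul_right _ hts)
    _ ≤ ∑ y, (a ^ t) ^ hammingNorm y :=
        sum_le_sum_of_subset_of_nonneg (subset_univ S) fun _ _ _ => by positivity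
    _ = (1 + a ^ t) ^ Fintype.card κ := sum_pow_hammingNorm _

section Bernoulli

variable {ι κ : Type*} [Fintype ι] [DecidableEq ι] [Fintype κ] [DecidableEq κ]

lemma sum_prod_prod_eq_prod_prod_sum {α R : Type*} [Fintype α] [CommSemiring R]
    (f : ι → κ → α → R) :
    ∑ M : ι → κ → α, ∏ i, ∏ j, f i j (M i j) = ∏ i, ∏ j, ∑ x, f i j x := by
  simp only [Fintype.prod_sum]

lemma sum_bernoulli_mul_chi_dotProduct (p : ℝ) (z : ι → κ → ZMod 2) :
    ∑ M : ι → κ → ZMod 2, (∏ i, ∏ j, if M i j = 1 then p else 1 - p) *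
        chi (∑ i, ∑ j, M i j * z i j) = ∏ i, (1 - 2 * p) ^ hammingNorm (z i) := by
  have hfactor : ∀ M : ι → κ → ZMod 2,
      (∏ i, ∏ j, if M i j = 1 then p else 1 - p) * chi (∑ i, ∑ j, M i j * z i j) =
        ∏ i, ∏ j, (if M i j = 1 then p else 1 - p) * chi (M i j * z i j) := by
    intro M
    simp only [chi_sum, ← prod_mul_distrib]
  rw [sum_congr rfl fun M _ => hfactor M,
    sum_prod_prod_eq_prod_prod_sum fun i j x => (if x = 1 then p else 1 - p) * chi (x * z i j)]
  simp only [sum_bernoulli_mul_chi_mul, pow_hammingNorm_eq_prod]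

lemma sum_bernoulli_mul_chi_sum_rows (p : ℝ) (T : Finset ι) (y : κ → ZMod 2) :
    ∑ M : ι → κ → ZMod 2, (∏ i, ∏ j, if M i j = 1 then p else 1 - p) *
        chi (∑ i ∈ T, ∑ j, M i j * y j) = ((1 - 2 * p) ^ hammingNorm y) ^ T.card := by
  have hrows : ∀ M : ι → κ → ZMod 2, ∑ i ∈ T, ∑ j, M i j * y j =
      ∑ i, ∑ j, M i j * (if i ∈ T then y else 0) j := by
    intro M
    simp only [ite_apply, Pi.zero_apply, mul_ite, mul_zero, sum_ite_irrel, sum_const_zero]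
    rw [sum_ite_mem, univ_inter]
  simp only [hrows, sum_bernoulli_mul_chi_dotProduct, apply_ite, hammingNorm_zero, pow_zero]
  rw [prod_ite_mem, univ_inter, prod_const]

lemma sum_bernoulli_mul_average_chi (p : ℝ) (S : Finset (κ → ZMod 2)) (T : Finset ι) :
    ∑ M : ι → κ → ZMod 2, (∏ i, ∏ j, if M i j = 1 then p else 1 - p) *
        ((S.card : ℝ)⁻¹ * ∑ y ∈ S, chi (∑ i ∈ T, ∑ j, M i j * y j)) =
      (S.card : ℝ)⁻¹ * ∑ y ∈ S, ((1 - 2 * p) ^ hammingNorm y) ^ T.card := by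
  simp only [← sum_bernoulli_mul_chi_sum_rows, mul_sum]
  rw [sum_comm]
  exact sum_congr rfl fun _ _ => sum_congr rfl fun _ _ => by ring

end Bernoulli

lemma add_one_pow_le_exp_mul {x : ℝ} (hx : -1 ≤ x) (n : ℕ) : (x + 1) ^ n ≤ Real.exp (n * x) := by
  rw [Real.exp_nat_mul]
  exact pow_le_pow_left₀ (by linarith) (Real.add_one_le_exp x) n

lemma one_add_one_sub_two_mul_pow_pow_le_exp {p : ℝ} (hp : p ≤ 1 / 2) (n t : ℕ) :
    (1 + (1 - 2 * p) ^ t) ^ n ≤ Real.exp (n * Real.exp (-2 * p * t)) := by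
  have h₀ : 0 ≤ 1 - 2 * p := by linarith
  have hpow : (1 - 2 * p) ^ t ≤ Real.exp (-2 * p * t) :=
    calc (1 - 2 * p) ^ t = (-2 * p + 1) ^ t := by ring
      _ ≤ Real.exp (t * (-2 * p)) := add_one_pow_le_exp_mul (by linarith) t
      _ = Real.exp (-2 * p * t) := by ring_nf
  calc (1 + (1 - 2 * p) ^ t) ^ n = ((1 - 2 * p) ^ t + 1) ^ n := by ring
    _ ≤ Real.exp (n * (1 - 2 * p) ^ t) :=
        add_one_pow_le_exp_mul (by linarith [pow_nonneg h₀ t]) n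
    _ ≤ Real.exp (n * Real.exp (-2 * p * t)) := by gcongr

/-- For a random `m×n` GF(2) matrix `M` with i.i.d. Bernoulli(p) entries
(`p ≤ 1/2`), `Y` uniform on `S₀` of size `2^k`, and `T ⊆ [m]` with `|T| ≥ t`,
`|E_{M,Y}[(−1)^{Σ_{i∈T} M_i Y}]| ≤ (1+(1−2p)^t)^n/2^k ≤ e^{n·e^{−2pt}}/2^k`. -/
theorem stmt13 (m n k t : ℕ) (p : ℝ) (hp0 : 0 ≤ p) (hp : p ≤ 1/2)
    (S₀ : Finset (Fin n → ZMod 2)) (hS : S₀.card = 2^k)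
    (T : Finset (Fin m)) (hT : t ≤ T.card) :
    |∑ M : Matrix (Fin m) (Fin n) (ZMod 2),
        (∏ i, ∏ j, if M i j = 1 then p else 1 - p) *
          ((S₀.card : ℝ)⁻¹ * ∑ y ∈ S₀, chi (∑ i ∈ T, ∑ j, M i j * y j))|
      ≤ (1 + (1 - 2*p)^t)^n / 2^k
    ∧ (1 + (1 - 2*p)^t)^n / 2^k
      ≤ Real.exp (n * Real.exp (-2*p*t)) / 2^k := by
  have h₀ : 0 ≤ 1 - 2 * p := by linarith
  have h₁ : 1 - 2 * p ≤ 1 := by linarith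
  refine ⟨?_, by gcongr; exact one_add_one_sub_two_mul_pow_pow_le_exp hp n t⟩
  -- the sum over `Matrix` matches the lemma's sum over `Fin m → Fin n → ZMod 2` only after
  -- unfolding, so it is transported by `congrArg` rather than rewritten
  refine (congrArg abs (sum_bernoulli_mul_average_chi p S₀ T)).trans_le ?_
  rw [abs_of_nonneg (by positivity), hS, Nat.cast_pow, Nat.cast_two, inv_mul_eq_div]
  gcongr
  simpa using sum_pow_pow_hammingNorm_le h₀ h₁ hT S₀
end
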